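/- Let q ≥ 2 and L ≥ 2, and let α(C(q,L)) denote the independence number of the layered chain graph C(q,L). If L = 2a then α(C(q,L)) = q^{2a−1} − q^a + 1, and if L = 2a+1 then α(C(q,L)) = q^{2a} − q^a. Consequently, the minimum size of a vertex cover of C(q,L) equals q^a − 2 when L = 2a and q^a − 1 when L = 2a+1. -/

import Mathlib

/-- Vertex type of the layered chain graph `C(q,L)`: a vertex is a pair `(k, j)`
where `k` is its layer (`1 ≤ k ≤ L-1`) and `j` indexes the `(q-1)·q^(L-k-1)`
vertices of layer `V_k`. -/
abbrev ChainVert (q L : ℕ) :=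
  {v : ℕ × ℕ // 1 ≤ v.1 ∧ v.1 ≤ L - 1 ∧ v.2 < (q - 1) * q ^ (L - v.1 - 1)}

/-- The layered chain graph `C(q,L)`: distinct vertices in layers `k` and `ℓ`
are adjacent iff `k + ℓ ≥ L`. -/
def chainGraph (q L : ℕ) : SimpleGraph (ChainVert q L) where
  Adj x y := x ≠ y ∧ L ≤ x.val.1 + y.val.1
  symm := ⟨by
    rintro x y ⟨h1, h2⟩
    exact ⟨h1.symm, by omega⟩⟩
  loopless := ⟨fun x h => h.1 rfl⟩

/-- An independent set of a graph: no two distinct members are adjacent. -/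
def IsIndepSet' {V : Type*} (G : SimpleGraph V) (s : Set V) : Prop :=
  ∀ ⦃x⦄, x ∈ s → ∀ ⦃y⦄, y ∈ s → x ≠ y → ¬ G.Adj x y

/-- A vertex cover of a graph: a set of vertices meeting every edge. -/
def IsVertexCover {V : Type*} (G : SimpleGraph V) (s : Set V) : Prop :=
  ∀ ⦃x y⦄, G.Adj x y → x ∈ s ∨ y ∈ s

/-!
Read the vertex `(k, j)` of layer `k` as the number `q ^ (L - k - 1) + j`: layer `k` becomes the
block `[q ^ (L - k - 1), q ^ (L - k))` of base-`q` numbers with `L - k` digits, so the layers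
`≤ t` fill `[q ^ (L - 1 - t), q ^ (L - 1))` and hold `q ^ (L - 1) - q ^ (L - 1 - t)` vertices.
An independent set either stays in the layers `≤ t` for `t = ⌊(L - 1) / 2⌋`, or contains a
vertex above them, and then all its other vertices lie in the layers `≤ L - 2 - t`; the larger of
the two resulting bounds is attained. Vertex covers are the complements of independent sets.
-/

theorem Nat.sub_one_mul_pow_add_pow {q : ℕ} (hq : 0 < q) (e : ℕ) :
    (q - 1) * q ^ e + q ^ e = q ^ (e + 1) := by
  rw [← Nat.succ_mul, Nat.succ_eq_add_one, Nat.sub_add_cancel hq, pow_succ, mul_comm]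

theorem Nat.log_pow_add {q e j : ℕ} (hq : 0 < q) (h : j < (q - 1) * q ^ e) :
    Nat.log q (q ^ e + j) = e :=
  Nat.log_eq_of_pow_le_of_lt_pow (Nat.le_add_right _ _)
    (by rw [← Nat.sub_one_mul_pow_add_pow hq]; omega)

theorem Nat.sub_pow_log_lt {q n : ℕ} (hq : 1 < q) :
    n - q ^ Nat.log q n < (q - 1) * q ^ Nat.log q n := by
  have h := Nat.lt_pow_succ_log_self hq n
  rw [← Nat.sub_one_mul_pow_add_pow (by omega)] at h
  have : 0 < (q - 1) * q ^ Nat.log q n := Nat.mul_pos (by omega) (Nat.pow_pos (by omega))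
  omega

namespace ChainVert

variable {q L : ℕ}

def index (v : ChainVert q L) : ℕ := q ^ (L - v.1.1 - 1) + v.1.2

instance : Finite (ChainVert q L) := by
  refine ((Set.finite_Iic L).prod (Set.finite_Iio ((q - 1) * q ^ L))).subset ?_ |>.to_subtype
  rintro ⟨k, j⟩ ⟨-, hk, hj⟩
  rcases q.eq_zero_or_pos with rfl | hq
  · simp at hj
  · exact ⟨by simp only [Set.mem_Iic]; omega,
      hj.trans_le (Nat.mul_le_mul_left _ (Nat.pow_le_pow_right hq (by omega)))⟩

theorem log_index (hq : 0 < q) (v : ChainVert q L) : Nat.log q v.index = L - v.1.1 - 1 :=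
  Nat.log_pow_add hq v.2.2.2

theorem index_lt (hq : 0 < q) (v : ChainVert q L) : v.index < q ^ (L - v.1.1) := by
  obtain ⟨hk, hkL, hj⟩ := v.2
  have h := Nat.sub_one_mul_pow_add_pow hq (L - v.1.1 - 1)
  rw [show L - v.1.1 - 1 + 1 = L - v.1.1 by omega] at h
  unfold index; omega

theorem index_injective (hq : 0 < q) : Function.Injective (index : ChainVert q L → ℕ) := by
  intro v w h
  have hlayer : v.1.1 = w.1.1 := by
    have := congrArg (Nat.log q) h
    rw [log_index hq, log_index hq] at this
    have := v.2.1; have := v.2.2.1; have := w.2.1; have := w.2.2.1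
    omega
  have hj : v.1.2 = w.1.2 := by
    unfold index at h; rw [hlayer] at h; omega
  exact Subtype.ext (Prod.ext hlayer hj)

theorem image_index_setOf_layer_le (hq : 1 < q) (t : ℕ) :
    index '' {v : ChainVert q L | v.1.1 ≤ t} = Set.Ico (q ^ (L - 1 - t)) (q ^ (L - 1)) := by
  ext n
  constructor
  · rintro ⟨v, hv : v.1.1 ≤ t, rfl⟩
    have := v.2.1
    exact ⟨(Nat.pow_le_pow_right (by omega) (by omega)).trans (Nat.le_add_right _ _),
      (index_lt (by omega) v).trans_le (Nat.pow_le_pow_right (by omega) (by omega))⟩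
  · rintro ⟨hlo, hhi⟩
    have hn : n ≠ 0 := ((Nat.pow_pos (by omega)).trans_le hlo).ne'
    have he : Nat.log q n < L - 1 := Nat.log_lt_of_lt_pow hn hhi
    have hte : L - 1 - t ≤ Nat.log q n := Nat.le_log_of_pow_le hq hlo
    have hpow : q ^ Nat.log q n ≤ n := Nat.pow_log_le_self q hn
    have hexp : L - (L - 1 - Nat.log q n) - 1 = Nat.log q n := by omega
    refine ⟨⟨(L - 1 - Nat.log q n, n - q ^ Nat.log q n), by omega, by omega,
      by rw [hexp]; exact Nat.sub_pow_log_lt hq⟩, show L - 1 - Nat.log q n ≤ t by omega, ?_⟩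
    simp only [index, hexp]
    omega

theorem ncard_setOf_layer_le (hq : 1 < q) (t : ℕ) :
    {v : ChainVert q L | v.1.1 ≤ t}.ncard = q ^ (L - 1) - q ^ (L - 1 - t) := by
  rw [← Set.ncard_image_of_injective _ (index_injective (by omega)),
    image_index_setOf_layer_le hq, Set.ncard_eq_toFinset_card', Set.toFinset_Ico, Nat.card_Ico]

theorem natCard_eq (hq : 1 < q) : Nat.card (ChainVert q L) = q ^ (L - 1) - 1 := by
  have : {v : ChainVert q L | v.1.1 ≤ L - 1} = Set.univ := Set.eq_univ_of_forall fun v => v.2.2.1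
  rw [← Set.ncard_univ, ← this, ncard_setOf_layer_le hq, Nat.sub_self, pow_zero]

end ChainVert

section Duality

variable {V : Type*} {G : SimpleGraph V}

theorem IsVertexCover.isIndepSet'_compl {c : Set V} (hc : IsVertexCover G c) :
    IsIndepSet' G cᶜ :=
  fun _ hx _ hy _ hadj => (hc hadj).elim hx hy

theorem IsIndepSet'.isVertexCover_compl {s : Set V} (hs : IsIndepSet' G s) :
    IsVertexCover G sᶜ := by
  intro x y hadj
  by_contra! h
  simp only [Set.mem_compl_iff, not_not] at h
  exact hs h.1 h.2 hadj.ne hadj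

theorem isLeast_vertexCover_ncard_of_isGreatest [Finite V] {α : ℕ}
    (h : IsGreatest {n | ∃ s : Set V, IsIndepSet' G s ∧ s.ncard = n} α) :
    IsLeast {n | ∃ c : Set V, IsVertexCover G c ∧ c.ncard = n} (Nat.card V - α) := by
  obtain ⟨⟨s, hs, rfl⟩, hmax⟩ := h
  refine ⟨⟨sᶜ, hs.isVertexCover_compl, Set.ncard_compl s⟩, ?_⟩
  rintro n ⟨c, hc, rfl⟩
  have hle : cᶜ.ncard ≤ s.ncard := hmax ⟨cᶜ, hc.isIndepSet'_compl, rfl⟩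
  have := Set.ncard_add_ncard_compl c
  omega

end Duality

section ChainGraph

variable {q L : ℕ}

theorem isIndepSet'_chainGraph_iff {s : Set (ChainVert q L)} :
    IsIndepSet' (chainGraph q L) s ↔ ∀ x ∈ s, ∀ y ∈ s, x ≠ y → x.1.1 + y.1.1 < L := by
  simp only [IsIndepSet', chainGraph, not_and, not_le]
  exact ⟨fun h x hx y hy hxy => h hx hy hxy hxy, fun h x hx y hy hxy _ => h x hx y hy hxy⟩

theorem IsIndepSet'.ncard_le_max {s : Set (ChainVert q L)} (hs : IsIndepSet' (chainGraph q L) s)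
    (t : ℕ) :
    s.ncard ≤ max {v : ChainVert q L | v.1.1 ≤ t}.ncard
      ({v : ChainVert q L | v.1.1 ≤ L - 2 - t}.ncard + 1) := by
  by_cases hlow : ∀ v ∈ s, v.1.1 ≤ t
  · exact le_max_of_le_left (Set.ncard_le_ncard hlow)
  push Not at hlow
  obtain ⟨v, hv, hvt⟩ := hlow
  have hsub : s ⊆ insert v {u : ChainVert q L | u.1.1 ≤ L - 2 - t} := by
    intro u hu
    rcases eq_or_ne u v with rfl | huv
    · exact Set.mem_insert _ _
    · have := isIndepSet'_chainGraph_iff.1 hs u hu v hv huv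
      exact Set.mem_insert_of_mem _ (show u.1.1 ≤ L - 2 - t by omega)
  exact le_max_of_le_right ((Set.ncard_le_ncard hsub).trans (Set.ncard_insert_le _ _))

theorem isGreatest_indepSet'_ncard_of_even (hq : 1 < q) {a : ℕ} (ha : 1 ≤ a) :
    IsGreatest {n | ∃ s : Set (ChainVert q (2 * a)), IsIndepSet' (chainGraph q (2 * a)) s ∧
      s.ncard = n} (q ^ (2 * a - 1) - q ^ a + 1) := by
  have hN := ChainVert.ncard_setOf_layer_le (L := 2 * a) hq (a - 1)
  rw [show 2 * a - 1 - (a - 1) = a by omega] at hN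
  let v₀ : ChainVert q (2 * a) :=
    ⟨(a, 0), ha, by omega, Nat.mul_pos (by omega) (Nat.pow_pos (by omega))⟩
  have hv₀ : v₀.1.1 = a := rfl
  have hv₀_notMem : v₀ ∉ {v : ChainVert q (2 * a) | v.1.1 ≤ a - 1} := fun h => by
    change v₀.1.1 ≤ a - 1 at h; omega
  refine ⟨⟨insert v₀ {v | v.1.1 ≤ a - 1}, ?_,
    by rw [Set.ncard_insert_of_notMem hv₀_notMem, hN]⟩, ?_⟩
  · refine isIndepSet'_chainGraph_iff.2 fun x hx y hy hxy => ?_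
    rcases hx with rfl | (hx : x.1.1 ≤ a - 1) <;> rcases hy with rfl | (hy : y.1.1 ≤ a - 1)
    · exact absurd rfl hxy
    all_goals omega
  · rintro n ⟨s, hs, rfl⟩
    have := hs.ncard_le_max (a - 1)
    rw [show 2 * a - 2 - (a - 1) = a - 1 by omega, hN] at this
    omega

theorem isGreatest_indepSet'_ncard_of_odd (hq : 1 < q) {a : ℕ} (ha : 1 ≤ a) :
    IsGreatest {n | ∃ s : Set (ChainVert q (2 * a + 1)),
      IsIndepSet' (chainGraph q (2 * a + 1)) s ∧ s.ncard = n} (q ^ (2 * a) - q ^ a) := by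
  have hN := ChainVert.ncard_setOf_layer_le (L := 2 * a + 1) hq
  refine ⟨⟨{v | v.1.1 ≤ a}, ?_, by rw [hN, show 2 * a + 1 - 1 - a = a by omega]; rfl⟩, ?_⟩
  · exact isIndepSet'_chainGraph_iff.2 fun x (hx : x.1.1 ≤ a) y (hy : y.1.1 ≤ a) _ => by omega
  · rintro n ⟨s, hs, rfl⟩
    have := hs.ncard_le_max a
    rw [hN, hN, show 2 * a + 1 - 2 - a = a - 1 by omega, show 2 * a + 1 - 1 - a = a by omega,
      show 2 * a + 1 - 1 - (a - 1) = a + 1 by omega] at this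
    have h₁ : q ^ a < q ^ (a + 1) := Nat.pow_lt_pow_right hq (by omega)
    have h₂ : q ^ (a + 1) ≤ q ^ (2 * a) := Nat.pow_le_pow_right (by omega) (by omega)
    simp only [Nat.add_sub_cancel] at this
    omega

end ChainGraph

/-- The independence number of `C(q,L)` is
`q^(2a−1) − q^a + 1` when `L = 2a` and `q^(2a) − q^a` when `L = 2a+1`;
consequently the minimum vertex-cover size is `q^a − 2`, resp. `q^a − 1`. -/
theorem chainGraph_indepNumber_vertexCover (q L a : ℕ) (hq : 2 ≤ q) (hL : 2 ≤ L) :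
    (L = 2 * a →
      IsGreatest {n | ∃ s : Set (ChainVert q L),
          IsIndepSet' (chainGraph q L) s ∧ s.ncard = n}
        (q ^ (2 * a - 1) - q ^ a + 1) ∧
      IsLeast {n | ∃ s : Set (ChainVert q L),
          IsVertexCover (chainGraph q L) s ∧ s.ncard = n}
        (q ^ a - 2)) ∧
    (L = 2 * a + 1 →
      IsGreatest {n | ∃ s : Set (ChainVert q L),
          IsIndepSet' (chainGraph q L) s ∧ s.ncard = n}
        (q ^ (2 * a) - q ^ a) ∧
      IsLeast {n | ∃ s : Set (ChainVert q L),
          IsVertexCover (chainGraph q L) s ∧ s.ncard = n}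
        (q ^ a - 1)) := by
  refine ⟨fun hLa => ?_, fun hLa => ?_⟩ <;> subst hLa <;>
    obtain ⟨ha, hqa⟩ : 1 ≤ a ∧ q ≤ q ^ a := ⟨by omega, Nat.le_self_pow (by omega) q⟩
  · have hα := isGreatest_indepSet'_ncard_of_even hq ha
    refine ⟨hα, ?_⟩
    convert isLeast_vertexCover_ncard_of_isGreatest hα using 1
    have : q ^ a ≤ q ^ (2 * a - 1) := Nat.pow_le_pow_right (by omega) (by omega)
    rw [ChainVert.natCard_eq hq]
    omega
  · have hα := isGreatest_indepSet'_ncard_of_odd hq ha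
    refine ⟨hα, ?_⟩
    convert isLeast_vertexCover_ncard_of_isGreatest hα using 1
    have : q ^ a ≤ q ^ (2 * a) := Nat.pow_le_pow_right (by omega) (by omega)
    rw [ChainVert.natCard_eq hq, Nat.add_sub_cancel]
    omega
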